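/- arXiv:1406.6494 — 5 statements merged into one kernel-verified Lean document; each statement's English description precedes it below -/
import Mathlib

section
/- Let n be an odd positive integer and let S be a {0,1}-matrix of the form [C_n; B] (C_n stacked above B) that does not contain the 2×2 all-ones matrix as a submatrix, where C_n is the edge-vertex incidence matrix of the cycle of order n. If some row of B has exactly two nonzero entries, then S contains a submatrix of odd order h < n having exactly two 1's per row and per column. -/
/-- The edge-vertex incidence matrix of the cycle of order `n`:
`c_{i,j} = 1` iff `j = i` or `j = i+1 (mod n)`. -/
def cycleMatrix (n : ℕ) : Matrix (Fin n) (Fin n) ℕ :=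
  fun i j => if j = i ∨ (j : ℕ) = ((i : ℕ) + 1) % n then 1 else 0

private lemma addModCancel {n a x y : ℕ} (hx : x < n) (hy : y < n)
    (h : (a + x) % n = (a + y) % n) : x = y := by
  have h' : x ≡ y [MOD n] := Nat.ModEq.add_left_cancel' a h
  have h2 : x % n = y % n := h'
  rwa [Nat.mod_eq_of_lt hx, Nat.mod_eq_of_lt hy] at h2

private def colFun {n : ℕ} (d : ℕ) (a : Fin n) : Fin (d+1) → Fin n :=
  fun k => ⟨((a : ℕ) + (k : ℕ)) % n,
    Nat.mod_lt _ (Nat.lt_of_le_of_lt (Nat.zero_le _) a.isLt)⟩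

private lemma colFun_val {n : ℕ} (d : ℕ) (a : Fin n) (k : Fin (d+1)) :
    (colFun d a k : ℕ) = ((a : ℕ) + (k : ℕ)) % n := rfl

private def rowFun {n m : ℕ} (d : ℕ) (a : Fin n) (b : Fin m) :
    Fin (d+1) → Fin n ⊕ Fin m :=
  fun k => if (k : ℕ) < d then Sum.inl (colFun d a k) else Sum.inr b

private lemma rowFun_lt {n m : ℕ} (d : ℕ) (a : Fin n) (b : Fin m)
    (k : Fin (d+1)) (hk : (k : ℕ) < d) : rowFun d a b k = Sum.inl (colFun d a k) :=
  if_pos hk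

private lemma rowFun_eq {n m : ℕ} (d : ℕ) (a : Fin n) (b : Fin m)
    (k : Fin (d+1)) (hk : (k : ℕ) = d) : rowFun d a b k = Sum.inr b :=
  if_neg (by omega)

private lemma card_filter_eq_two {k : ℕ} (p : Fin k → Prop) [DecidablePred p]
    (x y : Fin k) (hxy : x ≠ y) (h : ∀ z, p z ↔ (z = x ∨ z = y)) :
    (Finset.univ.filter p).card = 2 := by
  have hs : Finset.univ.filter p = {x, y} := by
    ext z
    simp [h z]
  rw [hs, Finset.card_pair hxy]

private lemma stmt0_core (n m : ℕ)
    (S : Matrix (Fin n ⊕ Fin m) (Fin n) ℕ)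
    (htop : ∀ i j, S (Sum.inl i) j = cycleMatrix n i j)
    (hlin : ¬ ∃ (r₁ r₂ : Fin n ⊕ Fin m) (c₁ c₂ : Fin n), r₁ ≠ r₂ ∧ c₁ ≠ c₂ ∧
      S r₁ c₁ = 1 ∧ S r₁ c₂ = 1 ∧ S r₂ c₁ = 1 ∧ S r₂ c₂ = 1)
    (b : Fin m) (a e : Fin n) (hae : a ≠ e)
    (hb : ∀ j, S (Sum.inr b) j = 1 ↔ (j = a ∨ j = e))
    (d : ℕ) (hd1 : 1 ≤ d) (hd2 : d ≤ n - 1) (hdev : Even d)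
    (hde : ((a : ℕ) + d) % n = (e : ℕ)) :
    ∃ h : ℕ, Odd h ∧ h < n ∧
      ∃ (r : Fin h → Fin n ⊕ Fin m) (c : Fin h → Fin n),
        Function.Injective r ∧ Function.Injective c ∧
        (∀ i, (Finset.univ.filter fun j => S (r i) (c j) = 1).card = 2) ∧
        (∀ j, (Finset.univ.filter fun i => S (r i) (c j) = 1).card = 2) := by
  have npos : 0 < n := Nat.lt_of_le_of_lt (Nat.zero_le _) a.isLt
  have han : (a : ℕ) < n := a.isLt
  have hen : (e : ℕ) < n := e.isLt
  -- the matrix entries of the cycle part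
  have hC : ∀ (i j : Fin n), S (Sum.inl i) j = 1 ↔ (j = i ∨ (j : ℕ) = ((i : ℕ) + 1) % n) := by
    intro i j
    rw [htop i j]
    unfold cycleMatrix
    split_ifs with h
    · simp [h]
    · simp [h]
  have hd2' : 2 ≤ d := by
    obtain ⟨k, hk⟩ := hdev; omega
  -- d ≠ n - 1, else a 2×2 all-ones submatrix exists
  have hdn1 : d ≠ n - 1 := by
    intro hdn
    subst hdn
    have hea : ((e : ℕ) + 1) % n = (a : ℕ) := by
      rw [← hde, Nat.mod_add_mod]
      have h1 : (a : ℕ) + (n - 1) + 1 = (a : ℕ) + n := by omega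
      rw [h1, Nat.add_mod_right, Nat.mod_eq_of_lt han]
    apply hlin
    refine ⟨Sum.inl e, Sum.inr b, e, a, by simp, hae.symm, ?_, ?_, ?_, ?_⟩
    · rw [hC]; left; rfl
    · rw [hC]; right; rw [hea]
    · rw [hb]; right; rfl
    · rw [hb]; left; rfl
  have hdn : d + 1 < n := by omega
  set c := colFun d a with hcdef
  set r := rowFun d a b with hrdef
  have hc : ∀ k : Fin (d+1), (c k : ℕ) = ((a : ℕ) + (k : ℕ)) % n := fun k => rfl
  have hcinj : Function.Injective c := by
    intro x y hxy
    have h1 : (c x : ℕ) = (c y : ℕ) := congrArg Fin.val hxy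
    rw [hc, hc] at h1
    have hx : (x : ℕ) < n := by have := x.isLt; omega
    have hy : (y : ℕ) < n := by have := y.isLt; omega
    exact Fin.ext (addModCancel hx hy h1)
  have key1 : ∀ (i j : Fin (d+1)), (i : ℕ) < d →
      (S (r i) (c j) = 1 ↔ (j = i ∨ (j : ℕ) = (i : ℕ) + 1)) := by
    intro i j hi
    rw [hrdef, rowFun_lt d a b i hi, hC]
    constructor
    · rintro (h | h)
      · left; exact hcinj h
      · right
        rw [hc, hc, Nat.mod_add_mod] at h
        have h' : ((a : ℕ) + (j : ℕ)) % n = ((a : ℕ) + ((i : ℕ) + 1)) % n := by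
          rw [h, Nat.add_assoc]
        have hj : (j : ℕ) < n := by have := j.isLt; omega
        have hi1 : (i : ℕ) + 1 < n := by omega
        exact addModCancel hj hi1 h'
    · rintro (rfl | h)
      · left; rfl
      · right
        rw [hc, hc, Nat.mod_add_mod, h, Nat.add_assoc]
  have key2 : ∀ j : Fin (d+1),
      (S (Sum.inr b) (c j) = 1 ↔ ((j : ℕ) = 0 ∨ (j : ℕ) = d)) := by
    intro j
    rw [hb]
    have hj : (j : ℕ) < n := by have := j.isLt; omega
    constructor
    · rintro (h | h)
      · left
        have h1 : (c j : ℕ) = ((a : ℕ) + 0) % n := by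
          rw [congrArg Fin.val h]
          rw [Nat.add_zero, Nat.mod_eq_of_lt han]
        rw [hc] at h1
        exact addModCancel hj npos h1
      · right
        have h1 : (c j : ℕ) = ((a : ℕ) + d) % n := by
          rw [congrArg Fin.val h, hde]
        rw [hc] at h1
        exact addModCancel hj (by omega) h1
    · rintro (h | h)
      · left
        apply Fin.ext
        rw [hc, h, Nat.add_zero, Nat.mod_eq_of_lt han]
      · right
        apply Fin.ext
        rw [hc, h, hde]
  have hrowchar : ∀ (i j : Fin (d+1)), (S (r i) (c j) = 1) ↔
      (((i : ℕ) < d ∧ (j = i ∨ (j : ℕ) = (i : ℕ) + 1)) ∨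
       ((i : ℕ) = d ∧ ((j : ℕ) = 0 ∨ (j : ℕ) = d))) := by
    intro i j
    rcases lt_or_ge (i : ℕ) d with hi | hi
    · rw [key1 i j hi]
      constructor
      · intro h; exact Or.inl ⟨hi, h⟩
      · rintro (⟨_, h⟩ | ⟨h, _⟩)
        · exact h
        · omega
    · have hid : (i : ℕ) = d := by have := i.isLt; omega
      rw [hrdef, rowFun_eq d a b i hid, key2 j]
      constructor
      · intro h; exact Or.inr ⟨hid, h⟩
      · rintro (⟨h, _⟩ | ⟨_, h⟩)
        · omega
        · exact h
  have hrinj : Function.Injective r := by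
    intro x y hxy
    rcases lt_or_ge (x : ℕ) d with hx | hx <;> rcases lt_or_ge (y : ℕ) d with hy | hy
    · rw [hrdef, rowFun_lt d a b x hx, rowFun_lt d a b y hy] at hxy
      exact hcinj (Sum.inl.inj hxy)
    · have hy' : (y : ℕ) = d := by have := y.isLt; omega
      rw [hrdef, rowFun_lt d a b x hx, rowFun_eq d a b y hy'] at hxy
      exact absurd hxy (by simp)
    · have hx' : (x : ℕ) = d := by have := x.isLt; omega
      rw [hrdef, rowFun_eq d a b x hx', rowFun_lt d a b y hy] at hxy
      exact absurd hxy (by simp)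
    · have hx' : (x : ℕ) = d := by have := x.isLt; omega
      have hy' : (y : ℕ) = d := by have := y.isLt; omega
      exact Fin.ext (by omega)
  refine ⟨d + 1, ?_, hdn, r, c, hrinj, hcinj, ?_, ?_⟩
  · obtain ⟨k, hk⟩ := hdev
    exact ⟨k, by omega⟩
  · -- rows
    intro i
    rcases lt_or_ge (i : ℕ) d with hi | hi
    · apply card_filter_eq_two _ i ⟨(i : ℕ) + 1, by omega⟩
        (by simp [Fin.ext_iff])
      intro z
      rw [key1 i z hi]
      simp only [Fin.ext_iff]
      all_goals omega
    · have hid : (i : ℕ) = d := by have := i.isLt; omega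
      apply card_filter_eq_two _ ⟨0, by omega⟩ ⟨d, by omega⟩
        (by simp [Fin.ext_iff]; omega)
      intro z
      rw [hrdef, rowFun_eq d a b i hid, key2 z]
      simp only [Fin.ext_iff]
      all_goals omega
  · -- columns
    intro j
    have hjlt := j.isLt
    by_cases hj0 : (j : ℕ) = 0
    · apply card_filter_eq_two _ ⟨0, by omega⟩ ⟨d, by omega⟩
        (by simp [Fin.ext_iff]; omega)
      intro z
      rw [hrowchar z j]
      have := z.isLt
      simp only [Fin.ext_iff]
      all_goals omega
    · by_cases hjd : (j : ℕ) = d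
      · apply card_filter_eq_two _ ⟨d - 1, by omega⟩ ⟨d, by omega⟩
          (by simp [Fin.ext_iff]; omega)
        intro z
        rw [hrowchar z j]
        have := z.isLt
        simp only [Fin.ext_iff]
        all_goals omega
      · apply card_filter_eq_two _ ⟨(j : ℕ) - 1, by omega⟩ j
          (by simp [Fin.ext_iff]; omega)
        intro z
        rw [hrowchar z j]
        have := z.isLt
        simp only [Fin.ext_iff]
        all_goals omega

/-- If `S = [C_n; B]` is a `{0,1}`-matrix (rows `Sum.inl` form `C_n`,
rows `Sum.inr` form `B`) with `n` odd, `S` linear (no 2×2 all-ones submatrix),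
and some row of `B` has exactly two nonzero entries, then `S` contains a submatrix
of odd order `h < n` with exactly two 1's per row and per column. -/
theorem stmt0 (n m : ℕ) (hn : Odd n)
    (S : Matrix (Fin n ⊕ Fin m) (Fin n) ℕ)
    (h01 : ∀ i j, S i j = 0 ∨ S i j = 1)
    (htop : ∀ i j, S (Sum.inl i) j = cycleMatrix n i j)
    (hlin : ¬ ∃ (r₁ r₂ : Fin n ⊕ Fin m) (c₁ c₂ : Fin n), r₁ ≠ r₂ ∧ c₁ ≠ c₂ ∧
      S r₁ c₁ = 1 ∧ S r₁ c₂ = 1 ∧ S r₂ c₁ = 1 ∧ S r₂ c₂ = 1)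
    (hrow : ∃ b : Fin m,
      (Finset.univ.filter fun j => S (Sum.inr b) j ≠ 0).card = 2) :
    ∃ h : ℕ, Odd h ∧ h < n ∧
      ∃ (r : Fin h → Fin n ⊕ Fin m) (c : Fin h → Fin n),
        Function.Injective r ∧ Function.Injective c ∧
        (∀ i, (Finset.univ.filter fun j => S (r i) (c j) = 1).card = 2) ∧
        (∀ j, (Finset.univ.filter fun i => S (r i) (c j) = 1).card = 2) := by
  obtain ⟨b, hb2⟩ := hrow
  rw [Finset.card_eq_two] at hb2
  obtain ⟨c₁, c₂, hne, hset⟩ := hb2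
  have hmem : ∀ j, S (Sum.inr b) j = 1 ↔ (j = c₁ ∨ j = c₂) := by
    intro j
    have h1 : j ∈ Finset.univ.filter (fun j => S (Sum.inr b) j ≠ 0) ↔
        j ∈ ({c₁, c₂} : Finset (Fin n)) := by rw [hset]
    simp only [Finset.mem_filter, Finset.mem_univ, true_and, Finset.mem_insert,
      Finset.mem_singleton] at h1
    rcases h01 (Sum.inr b) j with h | h
    · simp [h] at h1 ⊢
      tauto
    · simp [h] at h1 ⊢
      tauto
  have hA : (c₁ : ℕ) < n := c₁.isLt
  have hB : (c₂ : ℕ) < n := c₂.isLt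
  have npos : 0 < n := by omega
  set d₀ : ℕ := ((c₂ : ℕ) + (n - (c₁ : ℕ))) % n with hd₀
  have h₁ : ((c₁ : ℕ) + d₀) % n = (c₂ : ℕ) := by
    rw [hd₀, Nat.add_mod_mod]
    have : (c₁ : ℕ) + ((c₂ : ℕ) + (n - (c₁ : ℕ))) = (c₂ : ℕ) + n := by omega
    rw [this, Nat.add_mod_right, Nat.mod_eq_of_lt hB]
  have hd₀lt : d₀ < n := Nat.mod_lt _ npos
  have hd₀pos : d₀ ≠ 0 := by
    intro h
    rw [h, Nat.add_zero, Nat.mod_eq_of_lt hA] at h₁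
    exact hne (Fin.ext h₁)
  rcases Nat.even_or_odd d₀ with hev | hodd
  · exact stmt0_core n m S htop hlin b c₁ c₂ hne hmem d₀ (by omega) (by omega) hev h₁
  · have hev : Even (n - d₀) := Nat.Odd.sub_odd hn hodd
    have h₂ : ((c₂ : ℕ) + (n - d₀)) % n = (c₁ : ℕ) := by
      rw [← h₁, Nat.mod_add_mod]
      have : (c₁ : ℕ) + d₀ + (n - d₀) = (c₁ : ℕ) + n := by omega
      rw [this, Nat.add_mod_right, Nat.mod_eq_of_lt hA]
    refine stmt0_core n m S htop hlin b c₂ c₁ hne.symm ?_ (n - d₀)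
      (by omega) (by omega) hev h₂
    intro j
    rw [hmem]
    tauto
end

section
/- Let A be a {0,1}-matrix that is linear (no 2×2 all-ones submatrix). Then A is balanced if and only if the row submatrix A↑ consisting of the maximal (non-dominated) rows of A is balanced. -/
/-- A matrix contains an odd cycle submatrix: a square submatrix of odd order
with exactly two 1's per row and per column. A `{0,1}`-matrix is balanced iff it
contains no such submatrix. -/
def ContainsOddCycleSubmatrix {ρ γ : Type*} (A : Matrix ρ γ ℕ) : Prop :=
  ∃ (h : ℕ) (r : Fin h → ρ) (c : Fin h → γ), Odd h ∧
    Function.Injective r ∧ Function.Injective c ∧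
    (∀ i, (Finset.univ.filter fun j => A (r i) (c j) = 1).card = 2) ∧
    (∀ j, (Finset.univ.filter fun i => A (r i) (c j) = 1).card = 2)

/-- A row is maximal (non-dominated) if every row dominating it is equal to it. -/
def IsMaximalRow {ρ γ : Type*} (A : Matrix ρ γ ℕ) (r : ρ) : Prop :=
  ∀ r' : ρ, (∀ j, A r j ≤ A r' j) → (∀ j, A r' j ≤ A r j)

/-!
An odd cycle submatrix of `A↑` is one of `A`. Conversely, each row of an odd cycle submatrix of `A`
has two 1's; by linearity a row dominating it cannot have a further 1, so the row is maximal and the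
cycle lives in `A↑`.
-/

section

variable {ρ γ : Type*}

theorem ContainsOddCycleSubmatrix.of_submatrix {ρ' γ' : Type*} {A : Matrix ρ γ ℕ}
    {f : ρ' → ρ} {g : γ' → γ} (hf : f.Injective) (hg : g.Injective)
    (hA : ContainsOddCycleSubmatrix (A.submatrix f g)) : ContainsOddCycleSubmatrix A := by
  obtain ⟨h, r, c, hodd, hr, hc, hrow, hcol⟩ := hA
  exact ⟨h, f ∘ r, g ∘ c, hodd, hf.comp hr, hg.comp hc, hrow, hcol⟩

theorem ContainsOddCycleSubmatrix.submatrix_subtype {A : Matrix ρ γ ℕ} {p : ρ → Prop}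
    (hp : ∀ r j₁ j₂, j₁ ≠ j₂ → A r j₁ = 1 → A r j₂ = 1 → p r)
    (hA : ContainsOddCycleSubmatrix A) :
    ContainsOddCycleSubmatrix (A.submatrix (Subtype.val : {r : ρ // p r} → ρ) id) := by
  obtain ⟨h, r, c, hodd, hr, hc, hrow, hcol⟩ := hA
  have hpr : ∀ i, p (r i) := fun i => by
    obtain ⟨j₁, j₂, hne, hset⟩ := Finset.card_eq_two.mp (hrow i)
    have hmem : ∀ j ∈ ({j₁, j₂} : Finset (Fin h)), A (r i) (c j) = 1 := fun j hj => by
      rw [← hset] at hj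
      exact (Finset.mem_filter.mp hj).2
    exact hp _ _ _ (hc.ne hne) (hmem j₁ (by simp)) (hmem j₂ (by simp))
  exact ⟨h, fun i => ⟨r i, hpr i⟩, c, hodd, fun _ _ hab => hr (congrArg Subtype.val hab), hc,
    hrow, hcol⟩

theorem isMaximalRow_of_eq_one_of_eq_one {A : Matrix ρ γ ℕ}
    (h01 : ∀ i j, A i j = 0 ∨ A i j = 1)
    (hlin : ¬ ∃ (r₁ r₂ : ρ) (c₁ c₂ : γ), r₁ ≠ r₂ ∧ c₁ ≠ c₂ ∧
      A r₁ c₁ = 1 ∧ A r₁ c₂ = 1 ∧ A r₂ c₁ = 1 ∧ A r₂ c₂ = 1)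
    {r : ρ} {j₁ j₂ : γ} (hne : j₁ ≠ j₂) (h₁ : A r j₁ = 1) (h₂ : A r j₂ = 1) :
    IsMaximalRow A r := by
  intro r' hle j
  have one_of_one : ∀ {k}, A r k = 1 → A r' k = 1 := fun {k} hk =>
    (h01 r' k).resolve_left fun h0 => by simpa [hk, h0] using hle k
  rcases h01 r' j with h0 | h1
  · simp [h0]
  rcases h01 r j with h0' | h1'
  · have hrr' : r ≠ r' := by rintro rfl; simp [h0'] at h1
    exact (hlin ⟨r, r', j₁, j₂, hrr', hne, h₁, h₂, one_of_one h₁, one_of_one h₂⟩).elim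
  · rw [h1, h1']

end

/-- A linear `{0,1}`-matrix `A` (no 2×2 all-ones submatrix) is
balanced if and only if its up-matrix `A↑` (the row submatrix of non-dominated
rows) is balanced. -/
theorem stmt7 {ρ γ : Type*} (A : Matrix ρ γ ℕ)
    (h01 : ∀ i j, A i j = 0 ∨ A i j = 1)
    (hlin : ¬ ∃ (r₁ r₂ : ρ) (c₁ c₂ : γ), r₁ ≠ r₂ ∧ c₁ ≠ c₂ ∧
      A r₁ c₁ = 1 ∧ A r₁ c₂ = 1 ∧ A r₂ c₁ = 1 ∧ A r₂ c₂ = 1) :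
    (¬ ContainsOddCycleSubmatrix A) ↔
      ¬ ContainsOddCycleSubmatrix
        (A.submatrix (Subtype.val : {r : ρ // IsMaximalRow A r} → ρ) id) := by
  rw [not_iff_not]
  exact ⟨.submatrix_subtype fun _ _ _ hne h₁ h₂ =>
      isMaximalRow_of_eq_one_of_eq_one h01 hlin hne h₁ h₂,
    .of_submatrix Subtype.val_injective Function.injective_id⟩
end

section
/- Let C be a cycle, A and B two disjoint vertex subsets of C, and ξ a vertex adjacent (in a supergraph G of C) to all of A ∪ B, where A ∪ {ξ} and B ∪ {ξ} are cliques of G. Let P be a path of C with one endpoint u ∈ A, the other endpoint v ∈ B, whose inner vertices are in neither A nor B nor equal to ξ, such that u is nonadjacent in G to all vertices of B∖{ξ}-side and v nonadjacent to A-side except via ξ, and the inner vertices of P induce a path in G. If P has an even number of vertices, then V(P) ∪ {ξ} induces an odd cycle of length ≥ 5 in G. -/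
/-!
Appending `ξ` to the path closes it into a cycle of length `k + 1`. That cycle is induced:
the path is induced once its nonadjacent ends are counted among its non-edges, and `ξ` sees
exactly the two ends of the path. The cycle is odd because `k` is even, and `k ≠ 2` because
the ends are nonadjacent.
-/

namespace Fin

variable {k : ℕ}

theorem castSucc_eq_castSucc_add_one_iff (i j : Fin k) :
    j.castSucc = i.castSucc + 1 ↔ (i : ℕ) + 1 = j := by
  rw [Fin.ext_iff, val_add_one, if_neg (castSucc_ne_last i)]
  simp only [val_castSucc]
  omega

theorem castSucc_eq_last_add_one_iff (j : Fin k) : j.castSucc = last k + 1 ↔ (j : ℕ) = 0 := by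
  simp [Fin.ext_iff]

theorem last_eq_castSucc_add_one_iff (i : Fin k) : last k = i.castSucc + 1 ↔ (i : ℕ) + 1 = k := by
  rw [Fin.ext_iff, val_add_one, if_neg (castSucc_ne_last i)]
  simp only [val_last, val_castSucc]
  omega

theorem last_ne_last_add_one [NeZero k] : last k ≠ last k + 1 := by
  rw [last_add_one, Ne, Fin.ext_iff]
  exact NeZero.ne k

end Fin

namespace SimpleGraph

variable {V : Type*} (G : SimpleGraph V)

def IsInducedPath {k : ℕ} (p : Fin k → V) : Prop :=
  Function.Injective p ∧ ∀ i j : Fin k, G.Adj (p i) (p j) ↔ (i : ℕ) + 1 = j ∨ (j : ℕ) + 1 = i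

variable {G}

theorem isInducedPath_of_adj_succ {k : ℕ} {p : Fin k → V} (hinj : Function.Injective p)
    (hsucc : ∀ i : Fin k, (h : (i : ℕ) + 1 < k) → G.Adj (p i) (p ⟨(i : ℕ) + 1, h⟩))
    (hfar : ∀ i j : Fin k, (i : ℕ) + 1 < j → ¬ G.Adj (p i) (p j)) :
    G.IsInducedPath p := by
  refine ⟨hinj, fun i j => ⟨fun hij => ?_, ?_⟩⟩
  · have hne : (i : ℕ) ≠ j := fun h => G.irrefl (by rwa [Fin.ext h] at hij)
    by_contra! hgap
    rcases Nat.lt_or_gt_of_ne hne with hlt | hlt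
    · exact hfar i j (by omega) hij
    · exact hfar j i (by omega) hij.symm
  · rintro (hij | hji)
    · rw [show j = ⟨i + 1, by omega⟩ from Fin.ext hij.symm]
      exact hsucc i _
    · rw [show i = ⟨j + 1, by omega⟩ from Fin.ext hji.symm]
      exact (hsucc j _).symm

theorem IsInducedPath.adj_snoc_iff {k : ℕ} [NeZero k] {p : Fin k → V} {ξ : V} (hp : G.IsInducedPath p)
    (hξ : ∀ i, G.Adj ξ (p i) ↔ (i : ℕ) = 0 ∨ (i : ℕ) + 1 = k) (i j : Fin (k + 1)) :
    G.Adj (Fin.snoc (α := fun _ => V) p ξ i) (Fin.snoc (α := fun _ => V) p ξ j) ↔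
      j = i + 1 ∨ i = j + 1 := by
  induction i using Fin.lastCases with
  | last =>
    induction j using Fin.lastCases with
    | last => simp only [Fin.snoc_last, G.irrefl, Fin.last_ne_last_add_one, or_self]
    | cast j =>
      rw [Fin.snoc_last, Fin.snoc_castSucc, hξ, Fin.castSucc_eq_last_add_one_iff,
        Fin.last_eq_castSucc_add_one_iff]
  | cast i =>
    induction j using Fin.lastCases with
    | last =>
      rw [Fin.snoc_last, Fin.snoc_castSucc, G.adj_comm, hξ, Fin.castSucc_eq_last_add_one_iff,
        Fin.last_eq_castSucc_add_one_iff, or_comm]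
    | cast j =>
      rw [Fin.snoc_castSucc, Fin.snoc_castSucc, hp.2, Fin.castSucc_eq_castSucc_add_one_iff,
        Fin.castSucc_eq_castSucc_add_one_iff]

end SimpleGraph

/-- Let `ξ` be a vertex adjacent to all of `A ∪ B` (`A`, `B`
disjoint sets not containing `ξ`), with `A ∪ {ξ}` and `B ∪ {ξ}` cliques of `G`.
Let `P = p 0, …, p (k-1)` be an induced path of `G` with `p 0 ∈ A`,
`p (k-1) ∈ B`, nonadjacent endpoints, inner vertices in neither `A` nor `B` nor
adjacent to `ξ`, and `ξ` not on `P`. If `P` has an even number `k` of vertices,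
then `V(P) ∪ {ξ}` induces an odd cycle of length `k + 1 ≥ 5` in `G`. -/
theorem stmt17 {V : Type*} (G : SimpleGraph V) (ξ : V) (A B : Set V)
    (hadjA : ∀ a ∈ A, G.Adj ξ a) (hadjB : ∀ b ∈ B, G.Adj ξ b)
    (k : ℕ) (hk : 2 ≤ k) (hke : Even k)
    (p : Fin k → V) (hinj : Function.Injective p)
    (hu : p ⟨0, by omega⟩ ∈ A) (hv : p ⟨k - 1, by omega⟩ ∈ B)
    (huv : ¬ G.Adj (p ⟨0, by omega⟩) (p ⟨k - 1, by omega⟩))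
    (hpath : ∀ i : Fin k, (h : (i : ℕ) + 1 < k) →
      G.Adj (p i) (p ⟨(i : ℕ) + 1, h⟩))
    (hindp : ∀ i j : Fin k, (i : ℕ) + 1 < (j : ℕ) →
      ¬ ((i : ℕ) = 0 ∧ (j : ℕ) = k - 1) → ¬ G.Adj (p i) (p j))
    (hξinner : ∀ i : Fin k, 0 < (i : ℕ) → (i : ℕ) < k - 1 → ¬ G.Adj ξ (p i))
    (hξnot : ∀ i, p i ≠ ξ) :
    Odd (k + 1) ∧ 5 ≤ k + 1 ∧
      ∃ f : ZMod (k + 1) → V, Function.Injective f ∧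
        (∀ i j : ZMod (k + 1), G.Adj (f i) (f j) ↔ (j = i + 1 ∨ i = j + 1)) ∧
        Set.range f = Set.range p ∪ {ξ} := by
  have : NeZero k := ⟨by omega⟩
  have hfar : ∀ i j : Fin k, (i : ℕ) + 1 < j → ¬ G.Adj (p i) (p j) := by
    intro i j hij
    by_cases hends : (i : ℕ) = 0 ∧ (j : ℕ) = k - 1
    · rwa [show i = ⟨0, by omega⟩ from Fin.ext hends.1,
        show j = ⟨k - 1, by omega⟩ from Fin.ext hends.2]
    · exact hindp i j hij hends
  have hk4 : 4 ≤ k := by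
    obtain ⟨m, rfl⟩ := hke
    by_contra! hsmall
    obtain rfl : m = 1 := by omega
    exact huv (hpath ⟨0, by omega⟩ (by simp))
  have hξ : ∀ i : Fin k, G.Adj ξ (p i) ↔ (i : ℕ) = 0 ∨ (i : ℕ) + 1 = k := by
    intro i
    refine ⟨fun hadj => ?_, ?_⟩
    · by_contra! hinner
      exact hξinner i (by omega) (by omega) hadj
    · rintro (h0 | hlast)
      · rw [show i = ⟨0, by omega⟩ from Fin.ext h0]
        exact hadjA _ hu
      · rw [show i = ⟨k - 1, by omega⟩ from Fin.ext (Nat.eq_sub_of_add_eq hlast)]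
        exact hadjB _ hv
  -- `ZMod (k + 1)` is definitionally `Fin (k + 1)`, so the cycle can be indexed by `Fin.snoc`.
  refine ⟨hke.add_one, by omega, (Fin.snoc p ξ : Fin (k + 1) → V), ?_,
    (SimpleGraph.isInducedPath_of_adj_succ hinj hpath hfar).adj_snoc_iff hξ, ?_⟩
  · exact Fin.snoc_injective_of_injective hinj fun ⟨i, hi⟩ => hξnot i hi
  · change Set.range (Fin.snoc p ξ : Fin (k + 1) → V) = _
    rw [Fin.range_snoc, Set.union_singleton]
end

section
/- Let w be a cyclic word over alphabet Σ (with distinguished letter ε) representing a sunword, and let ⪯ be the induced linear order on the proper letters with greatest element z. If w is jump-free (whenever two proper-letter blocks x^λ and y^μ are separated by a single ε in w, the letters x and y form a cover pair or coincide in ⪯) and satisfies the parity conditions, then every exponent of z in w is even. -/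
/-- Let `w = σ a^{λ_1} ε x_2^{λ_2} ε ⋯ ε x_s^{λ_s}` be a
representative of a sunword (blocks indexed `1,…,s`, block letters `x`,
exponents `lam`), with induced linear order on the proper letters, first and
last block letter the smallest proper letter `a`, and greatest proper letter
`z` (`a < z`). If `w` is jump-free (adjacent distinct block letters always form
a cover pair of the order) and satisfies the parity conditions
(`λ_1, λ_s` odd; for `1 < h < s`, `λ_h` odd iff `x (h-1) ≠ x (h+1)`),
then every exponent of `z` in `w` is even. -/
theorem stmt18 {L : Type*} [LinearOrder L] (s : ℕ) (hs1 : 1 ≤ s)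
    (x : ℕ → L) (lam : ℕ → ℕ) (a z : L)
    (ha1 : x 1 = a) (has : x s = a) (haz : a < z)
    (hmax : ∀ i ∈ Finset.Icc 1 s, x i ≤ z)
    (hadj : ∀ h : ℕ, 1 ≤ h → h < s → x h ≠ x (h + 1))
    (hjump : ∀ h : ℕ, 1 ≤ h → h < s → (x h ⋖ x (h + 1) ∨ x (h + 1) ⋖ x h))
    (hpar1 : Odd (lam 1) ∧ Odd (lam s))
    (hpar2 : ∀ h : ℕ, 1 < h → h < s → (Odd (lam h) ↔ x (h - 1) ≠ x (h + 1))) :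
    ∀ i ∈ Finset.Icc 1 s, x i = z → Even (lam i) := by
  intro i hi hiz
  simp only [Finset.mem_Icc] at hi
  obtain ⟨hi1, his⟩ := hi
  -- i cannot be 1 or s
  have hne1 : i ≠ 1 := by rintro rfl; rw [ha1] at hiz; exact absurd hiz (ne_of_lt haz)
  have hnes : i ≠ s := by rintro rfl; rw [has] at hiz; exact absurd hiz (ne_of_lt haz)
  have hi1' : 1 < i := lt_of_le_of_ne hi1 (Ne.symm hne1)
  have his' : i < s := lt_of_le_of_ne his hnes
  -- neighbors
  have him1 : i - 1 + 1 = i := by omega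
  have hprev_ne : x (i - 1) ≠ z := by
    have := hadj (i - 1) (by omega) (by omega)
    rw [him1] at this; rw [← hiz]; exact this
  have hnext_ne : x (i + 1) ≠ z := by
    have := hadj i (by omega) his'
    rw [hiz] at this; exact fun h => this h.symm
  have hprev_lt : x (i - 1) < z :=
    lt_of_le_of_ne (hmax _ (Finset.mem_Icc.mpr ⟨by omega, by omega⟩)) hprev_ne
  have hnext_lt : x (i + 1) < z :=
    lt_of_le_of_ne (hmax _ (Finset.mem_Icc.mpr ⟨by omega, by omega⟩)) hnext_ne
  -- covers
  have hcov1 : x (i - 1) ⋖ z := by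
    have := hjump (i - 1) (by omega) (by omega)
    rw [him1, hiz] at this
    rcases this with h | h
    · exact h
    · exact absurd h.lt (not_lt.mpr hprev_lt.le)
  have hcov2 : x (i + 1) ⋖ z := by
    have := hjump i (by omega) his'
    rw [hiz] at this
    rcases this with h | h
    · exact absurd h.lt (not_lt.mpr hnext_lt.le)
    · exact h
  -- covers below z coincide
  have heq : x (i - 1) = x (i + 1) := by
    rcases lt_trichotomy (x (i - 1)) (x (i + 1)) with h | h | h
    · exact absurd hnext_lt (hcov1.2 h)
    · exact h
    · exact absurd hprev_lt (hcov2.2 h)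
  rw [Nat.not_odd_iff_even.symm]
  intro hodd
  exact (hpar2 i hi1' his').mp hodd heq
end

section
/- Let w be a jump-free cyclic sunword over Σ and u an interval of a representative of w. If l and m are respectively the least and greatest proper letters occurring in u with respect to the induced linear order ⪯, then every proper letter x with l ⪯ x ⪯ m occurs in u. -/
private lemma stmt19_aux {L : Type*} [LinearOrder L] (s : ℕ) (x : ℕ → L)
    (hjump : ∀ h : ℕ, 1 ≤ h → h < s →
      (x h = x (h + 1) ∨ x h ⋖ x (h + 1) ∨ x (h + 1) ⋖ x h))
    (p q : ℕ) (hp : 1 ≤ p) (hq : q ≤ s)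
    (d : ℕ) : ∀ i : ℕ, i ∈ Finset.Icc p q → i + d ∈ Finset.Icc p q →
    ∀ c : L, x i ≤ c → c ≤ x (i + d) →
    ∃ t ∈ Finset.Icc p q, x t = c := by
  induction d with
  | zero =>
    intro i hi _ c h1 h2
    exact ⟨i, hi, le_antisymm h1 h2⟩
  | succ d ih =>
    intro i hi hj c h1 h2
    simp only [Finset.mem_Icc] at hi hj
    rcases eq_or_lt_of_le h2 with h | h
    · exact ⟨i + (d + 1), Finset.mem_Icc.mpr hj, h.symm⟩
    · have hk : i + d ∈ Finset.Icc p q :=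
        Finset.mem_Icc.mpr ⟨le_trans hi.1 (Nat.le_add_right _ _),
          le_trans (by omega) hj.2⟩
      have hkc : c ≤ x (i + d) := by
        have hcov := hjump (i + d) (by omega) (by omega)
        have heq : i + d + 1 = i + (d + 1) := by ring
        rw [heq] at hcov
        rcases hcov with he | hc | hc
        · rw [he]; exact h.le
        · exact le_of_not_gt fun hlt => hc.2 hlt h
        · exact le_of_lt (lt_trans h hc.lt)
      exact ih i (Finset.mem_Icc.mpr hi) hk c h1 hkc

/-- Let `x 1, …, x s` be the block letters of a jump-free sunword
(adjacent blocks carry equal letters or a cover pair of the induced linear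
order `≤` on proper letters). Then the support of any interval of blocks
`Icc p q` is order-convex: if a proper letter `c` satisfies
`x i ≤ c ≤ x j` for some blocks `i, j` of the interval, then `c` occurs as a
block letter within the interval. -/
theorem stmt19 {L : Type*} [LinearOrder L] (s : ℕ) (x : ℕ → L)
    (hjump : ∀ h : ℕ, 1 ≤ h → h < s →
      (x h = x (h + 1) ∨ x h ⋖ x (h + 1) ∨ x (h + 1) ⋖ x h))
    (p q : ℕ) (hp : 1 ≤ p) (hq : q ≤ s)
    (i j : ℕ) (hi : i ∈ Finset.Icc p q) (hj : j ∈ Finset.Icc p q)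
    (c : L) (hci : x i ≤ c) (hcj : c ≤ x j) :
    ∃ t ∈ Finset.Icc p q, x t = c := by
  rcases le_total i j with hij | hij
  · obtain ⟨d, rfl⟩ := Nat.exists_eq_add_of_le hij
    exact stmt19_aux s x hjump p q hp hq d i hi hj c hci hcj
  · obtain ⟨d, rfl⟩ := Nat.exists_eq_add_of_le hij
    have hjump' : ∀ h : ℕ, 1 ≤ h → h < s →
        ((fun n => OrderDual.toDual (x n)) h = (fun n => OrderDual.toDual (x n)) (h + 1) ∨
         (fun n => OrderDual.toDual (x n)) h ⋖ (fun n => OrderDual.toDual (x n)) (h + 1) ∨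
         (fun n => OrderDual.toDual (x n)) (h + 1) ⋖ (fun n => OrderDual.toDual (x n)) h) := by
      intro h h1 h2
      rcases hjump h h1 h2 with he | hc | hc
      · exact Or.inl (congrArg OrderDual.toDual he)
      · exact Or.inr (Or.inr hc.toDual)
      · exact Or.inr (Or.inl hc.toDual)
    obtain ⟨t, ht, hxt⟩ := stmt19_aux (L := Lᵒᵈ) s (fun n => OrderDual.toDual (x n))
      hjump' p q hp hq d j hj hi (OrderDual.toDual c) hcj hci
    exact ⟨t, ht, hxt⟩
end
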